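/- Let n ≥ 2 and let a₁ > a₂ > … > aₙ be real numbers. For k = 1,…,n define the Uhlenbeck functions Fₖ : ℝⁿ × ℝⁿ → ℝ by Fₖ(q, p) = qₖ² + Σ_{i ≠ k} (qₖ pᵢ − qᵢ pₖ)² / (aₖ − aᵢ). Then the functions F₁,…,Fₙ pairwise Poisson commute with respect to the canonical Poisson bracket on ℝⁿ × ℝⁿ: {Fₖ, Fₘ} = 0 identically for all k, m. (These are the first integrals of the Neumann system on the sphere.) -/

import Mathlib

/-!
Write `L_ki = q_k p_i - q_i p_k`, `c_ki = 1 / (a_k - a_i)` and `u^k_i = 2 c_ki L_ki`. The gradient of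
`F_k` is `((2 q_k + ⟨p, u^k⟩) e_k - p_k u^k, q_k u^k - ⟨q, u^k⟩ e_k)`, and since `u^m_k = u^k_m` the
bracket of two such gradients collapses to
`{F_k, F_m} = 4 L_km ∑ i, L_ki L_mi (c_ki c_mi + c_km c_ki - c_km c_mi)`.
Each factor in parentheses vanishes: for `i ∈ {k, m}` because `L_kk = L_mm = 0`, otherwise by the partial-fraction
identity for the three distinct numbers `a_k, a_i, a_m`.
-/

open Finset

/-- The canonical Poisson bracket of two functions on `ℝⁿ × ℝⁿ` (coordinates `(x, p)`):
`{F,G} = ∑ i, (∂F/∂xᵢ · ∂G/∂pᵢ − ∂F/∂pᵢ · ∂G/∂xᵢ)`. -/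
noncomputable def poissonBracket (n : ℕ) (F G : (Fin n → ℝ) × (Fin n → ℝ) → ℝ)
    (z : (Fin n → ℝ) × (Fin n → ℝ)) : ℝ :=
  ∑ i : Fin n,
    (fderiv ℝ F z (Pi.single i 1, 0) * fderiv ℝ G z (0, Pi.single i 1) -
      fderiv ℝ F z (0, Pi.single i 1) * fderiv ℝ G z (Pi.single i 1, 0))

variable {ι : Type*}

def angularMomentum {R : Type*} [CommRing R] (q p : ι → R) (i j : ι) : R :=
  q i * p j - q j * p i

@[simp]
theorem angularMomentum_self {R : Type*} [CommRing R] (q p : ι → R) (i : ι) :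
    angularMomentum q p i i = 0 :=
  sub_self _

theorem angularMomentum_swap {R : Type*} [CommRing R] (q p : ι → R) (i j : ι) :
    angularMomentum q p j i = -angularMomentum q p i j := by
  unfold angularMomentum; ring

noncomputable def uhlenbeckWeight (a q p : ι → ℝ) (k i : ι) : ℝ :=
  2 * angularMomentum q p k i / (a k - a i)

theorem uhlenbeckWeight_swap (a q p : ι → ℝ) (k i : ι) :
    uhlenbeckWeight a q p i k = uhlenbeckWeight a q p k i := by
  rw [uhlenbeckWeight, uhlenbeckWeight, angularMomentum_swap, ← neg_sub (a k), mul_neg,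
    neg_div_neg_eq]

theorem uhlenbeck_bracket_summand_eq_zero {a : ι → ℝ} (ha : Function.Injective a) (q p : ι → ℝ)
    {k m : ι} (hkm : k ≠ m) (i : ι) :
    angularMomentum q p k m * uhlenbeckWeight a q p k i * uhlenbeckWeight a q p m i -
        uhlenbeckWeight a q p k m * angularMomentum q p k i * uhlenbeckWeight a q p m i +
        uhlenbeckWeight a q p k m * angularMomentum q p m i * uhlenbeckWeight a q p k i = 0 := by
  rcases eq_or_ne i k with rfl | hik
  · simp [uhlenbeckWeight]
  rcases eq_or_ne i m with rfl | him
  · simp [uhlenbeckWeight]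
  have hki : a k - a i ≠ 0 := sub_ne_zero.mpr (ha.ne hik.symm)
  have hmi : a m - a i ≠ 0 := sub_ne_zero.mpr (ha.ne him.symm)
  have hkm' : a k - a m ≠ 0 := sub_ne_zero.mpr (ha.ne hkm)
  simp only [uhlenbeckWeight, angularMomentum]
  field_simp
  ring

variable [Fintype ι]

noncomputable def phaseCovector (A B : ι → ℝ) : (ι → ℝ) × (ι → ℝ) →L[ℝ] ℝ :=
  LinearMap.toContinuousLinearMap ((dotProductBilin ℝ ℝ A).coprod (dotProductBilin ℝ ℝ B))

@[simp]
theorem phaseCovector_apply (A B : ι → ℝ) (w : (ι → ℝ) × (ι → ℝ)) :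
    phaseCovector A B w = A ⬝ᵥ w.1 + B ⬝ᵥ w.2 :=
  rfl

theorem poissonBracket_eq_of_hasFDerivAt {n : ℕ} {F G : (Fin n → ℝ) × (Fin n → ℝ) → ℝ}
    {z : (Fin n → ℝ) × (Fin n → ℝ)} {A B C D : Fin n → ℝ}
    (hF : HasFDerivAt F (phaseCovector A B) z) (hG : HasFDerivAt G (phaseCovector C D) z) :
    poissonBracket n F G z = A ⬝ᵥ D - B ⬝ᵥ C := by
  simp only [poissonBracket, hF.fderiv, hG.fderiv, phaseCovector_apply, dotProduct_single_one,
    dotProduct_zero, add_zero, zero_add]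
  simp [dotProduct, sum_sub_distrib]

/-- The `i = k` term of the sum is `0 ^ 2 / 0 = 0`, so summing over all `i` is harmless. -/
noncomputable def uhlenbeck (a : ι → ℝ) (k : ι) (z : (ι → ℝ) × (ι → ℝ)) : ℝ :=
  z.1 k ^ 2 + ∑ i, angularMomentum z.1 z.2 k i ^ 2 / (a k - a i)

theorem uhlenbeck_eq_sum_erase [DecidableEq ι] (a : ι → ℝ) (k : ι) (q p : ι → ℝ) :
    uhlenbeck a k (q, p) =
      q k ^ 2 + ∑ i ∈ univ.erase k, (q k * p i - q i * p k) ^ 2 / (a k - a i) := by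
  rw [uhlenbeck, ← add_sum_erase _ _ (mem_univ k)]
  simp [angularMomentum]

theorem hasFDerivAt_uhlenbeck [DecidableEq ι] (a : ι → ℝ) (k : ι) (z : (ι → ℝ) × (ι → ℝ)) :
    HasFDerivAt (uhlenbeck a k)
      (phaseCovector
        (Pi.single k (2 * z.1 k + z.2 ⬝ᵥ uhlenbeckWeight a z.1 z.2 k) -
          z.2 k • uhlenbeckWeight a z.1 z.2 k)
        (z.1 k • uhlenbeckWeight a z.1 z.2 k -
          Pi.single k (z.1 ⬝ᵥ uhlenbeckWeight a z.1 z.2 k)))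
      z := by
  have hq : ∀ i, HasFDerivAt (fun w : (ι → ℝ) × (ι → ℝ) => w.1 i)
      (phaseCovector (Pi.single i 1) 0) z := fun i => by
    convert (phaseCovector (Pi.single i 1) 0).hasFDerivAt using 1
    ext w; simp
  have hp : ∀ i, HasFDerivAt (fun w : (ι → ℝ) × (ι → ℝ) => w.2 i)
      (phaseCovector 0 (Pi.single i 1)) z := fun i => by
    convert (phaseCovector 0 (Pi.single i 1)).hasFDerivAt using 1
    ext w; simp
  have hL : ∀ i, HasFDerivAt (fun w : (ι → ℝ) × (ι → ℝ) => angularMomentum w.1 w.2 k i) _ z :=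
    fun i => ((hq k).mul (hp i)).sub ((hq i).mul (hp k))
  have H := ((hq k).pow 2).fun_add (HasFDerivAt.fun_sum (u := univ) fun i _ =>
    ((hL i).pow 2).mul_const (a k - a i)⁻¹)
  simp only [← div_eq_mul_inv] at H
  refine H.congr_fderiv (ContinuousLinearMap.ext fun w => ?_)
  set u := uhlenbeckWeight a z.1 z.2 k
  simp only [add_apply, _root_.sum_apply, sub_apply, smul_apply, phaseCovector_apply,
    zero_dotProduct, sub_dotProduct, smul_dotProduct, single_dotProduct, smul_eq_mul,
    nsmul_eq_mul, zero_add, add_zero]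
  simp only [dotProduct, add_mul, sum_mul, mul_sum]
  rw [add_sub_assoc, ← sum_sub_distrib, add_assoc, ← sum_sub_distrib, ← sum_add_distrib]
  congr 1
  · ring
  · refine sum_congr rfl fun i _ => ?_
    simp only [u, uhlenbeckWeight]
    field_simp
    ring

theorem uhlenbeck_gradient_pairing {R : Type*} [CommRing R] [DecidableEq ι]
    (q p u v : ι → R) {k m : ι} (hkm : k ≠ m) :
    (Pi.single k (2 * q k + p ⬝ᵥ u) - p k • u) ⬝ᵥ (q m • v - Pi.single m (q ⬝ᵥ v)) -
        (q k • u - Pi.single k (q ⬝ᵥ u)) ⬝ᵥ (Pi.single m (2 * q m + p ⬝ᵥ v) - p m • v) =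
      2 * q k * q m * (v k - u m) + ∑ i, (angularMomentum q p k m * u i * v i -
        u m * angularMomentum q p k i * v i + v k * angularMomentum q p m i * u i) := by
  simp only [sub_dotProduct, dotProduct_sub, smul_dotProduct, dotProduct_smul, single_dotProduct,
    dotProduct_single, Pi.sub_apply, Pi.smul_apply, Pi.single_eq_of_ne hkm.symm, smul_eq_mul]
  simp only [dotProduct, angularMomentum, mul_add, add_mul, mul_sub, sub_mul, mul_sum, sum_mul,
    sum_add_distrib, sum_sub_distrib]
  ring_nf

theorem poissonBracket_uhlenbeck {n : ℕ} {a : Fin n → ℝ} (ha : Function.Injective a)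
    (k m : Fin n) (z : (Fin n → ℝ) × (Fin n → ℝ)) :
    poissonBracket n (uhlenbeck a k) (uhlenbeck a m) z = 0 := by
  rw [poissonBracket_eq_of_hasFDerivAt (hasFDerivAt_uhlenbeck a k z)
    (hasFDerivAt_uhlenbeck a m z)]
  rcases eq_or_ne k m with rfl | hkm
  · rw [dotProduct_comm, sub_self]
  rw [uhlenbeck_gradient_pairing _ _ _ _ hkm, uhlenbeckWeight_swap, sub_self, mul_zero, zero_add]
  exact sum_eq_zero fun i _ => uhlenbeck_bracket_summand_eq_zero ha z.1 z.2 hkm i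

theorem uhlenbeck_integrals_commute_general (n : ℕ) (a : Fin n → ℝ)
    (ha : StrictAnti a) (F : Fin n → (Fin n → ℝ) × (Fin n → ℝ) → ℝ)
    (hF : ∀ (k : Fin n) (q p : Fin n → ℝ),
      F k (q, p) = (q k) ^ 2 +
        ∑ i ∈ Finset.univ.erase k, (q k * p i - q i * p k) ^ 2 / (a k - a i)) :
    ∀ (k m : Fin n) (z : (Fin n → ℝ) × (Fin n → ℝ)), poissonBracket n (F k) (F m) z = 0 := by
  obtain rfl : F = uhlenbeck a := funext fun k => funext fun z => by
    rw [hF, uhlenbeck_eq_sum_erase]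
  exact poissonBracket_uhlenbeck ha.injective

/-- The Uhlenbeck integrals of the Neumann system pairwise Poisson commute on `ℝⁿ × ℝⁿ`. -/
theorem uhlenbeck_integrals_commute (n : ℕ) (hn : 2 ≤ n) (a : Fin n → ℝ)
    (ha : StrictAnti a) (F : Fin n → (Fin n → ℝ) × (Fin n → ℝ) → ℝ)
    (hF : ∀ (k : Fin n) (q p : Fin n → ℝ),
      F k (q, p) = (q k) ^ 2 +
        ∑ i ∈ Finset.univ.erase k, (q k * p i - q i * p k) ^ 2 / (a k - a i)) :
    ∀ (k m : Fin n) (z : (Fin n → ℝ) × (Fin n → ℝ)), poissonBracket n (F k) (F m) z = 0 :=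
  uhlenbeck_integrals_commute_general n a ha F hF
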